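/- Let u be in the open simplex D and let cross-diffusion coefficients K_{ij} = K_{ji} > 0 for 0 \leq i \neq j \leq n, and let \beta = \min_{0 \leq i \neq j \leq n} K_{ij}. Then the mobility-type matrix \tilde{M}(u) with entries \tilde{M}_{ii}(u) = (K_{i0}-\beta)(1-\rho_u)u_i + \sum_{j\neq i}(K_{ij}-\beta)u_i u_j and \tilde{M}_{ij}(u) = -(K_{ij}-\beta)u_i u_j for j \neq i is positive semi-definite: for every z \in \mathbb{R}^n, z^T \tilde{M}(u) z = \sum_{i=1}^n (K_{i0}-\beta)(1-\rho_u)u_i z_i^2 + \frac{1}{2}\sum_{i\neq j}(K_{ij}-\beta)u_i u_j (z_i - z_j)^2 \geq 0. -/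
import Mathlib


open Finset

def openSimplex (n : ℕ) : Set (Fin n → ℝ) :=
  {u | (∀ i, 0 < u i) ∧ ∑ i, u i < 1}

/-- The matrix `M̃(u)` built from cross-diffusion coefficients `K` (indexed by the
`n+1` species `0,1,…,n`, species `i ∈ {1,…,n}` being represented by `i.succ`) and
the shift `β`. -/
noncomputable def Mtilde (n : ℕ) (K : Fin (n + 1) → Fin (n + 1) → ℝ) (β : ℝ)
    (u : Fin n → ℝ) : Matrix (Fin n) (Fin n) ℝ :=
  fun i j =>
    if i = j then
      (K i.succ 0 - β) * (1 - ∑ k, u k) * u i +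
        ∑ k ∈ univ.filter (· ≠ i), (K i.succ k.succ - β) * u i * u k
    else -(K i.succ j.succ - β) * u i * u j

theorem Mtilde_posSemidef (n : ℕ) (hn : 1 ≤ n)
    (K : Fin (n + 1) → Fin (n + 1) → ℝ)
    (hsym : ∀ i j, K i j = K j i)
    (hpos : ∀ i j, i ≠ j → 0 < K i j)
    (β : ℝ) (hβ : IsLeast {x | ∃ i j : Fin (n + 1), i ≠ j ∧ x = K i j} β)
    (u : Fin n → ℝ) (hu : u ∈ openSimplex n) (z : Fin n → ℝ) :
    (∑ i, ∑ j, z i * Mtilde n K β u i j * z j =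
      ∑ i, (K i.succ 0 - β) * (1 - ∑ k, u k) * u i * z i ^ 2 +
        (1 / 2) * ∑ i, ∑ j ∈ univ.filter (· ≠ i),
          (K i.succ j.succ - β) * u i * u j * (z i - z j) ^ 2) ∧
    0 ≤ ∑ i, ∑ j, z i * Mtilde n K β u i j * z j := by
  set ρ := ∑ k, u k with hρ
  have hβle : ∀ a b : Fin (n + 1), a ≠ b → β ≤ K a b := fun a b h =>
    hβ.2 ⟨a, b, h, rfl⟩
  -- swap lemma
  have hswap : ∀ g : Fin n → Fin n → ℝ,
      ∑ i, ∑ j ∈ univ.filter (· ≠ i), g i j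
        = ∑ i, ∑ j ∈ univ.filter (· ≠ i), g j i := by
    intro g
    simp only [sum_filter]
    rw [Finset.sum_comm]
    refine Finset.sum_congr rfl fun i _ => Finset.sum_congr rfl fun j _ => ?_
    by_cases h : i = j
    · subst h; simp
    · rw [if_pos h, if_pos (Ne.symm h)]
  -- per-row expansion
  have key : ∀ i, ∑ j, z i * Mtilde n K β u i j * z j
      = (K i.succ 0 - β) * (1 - ρ) * u i * z i ^ 2
        + ∑ j ∈ univ.filter (· ≠ i),
            (K i.succ j.succ - β) * u i * u j * (z i ^ 2 - z i * z j) := by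
    intro i
    rw [← Finset.sum_filter_add_sum_filter_not univ (· = i)
      (fun j => z i * Mtilde n K β u i j * z j)]
    have hfe : univ.filter (· = i) = {i} := by ext x; simp
    have hfn : univ.filter (fun j => ¬ j = i) = univ.filter (· ≠ i) := rfl
    rw [hfe, hfn, Finset.sum_singleton]
    have hdiag : z i * Mtilde n K β u i i * z i
        = (K i.succ 0 - β) * (1 - ρ) * u i * z i ^ 2
          + ∑ j ∈ univ.filter (· ≠ i),
              (K i.succ j.succ - β) * u i * u j * z i ^ 2 := by
      have : Mtilde n K β u i i = (K i.succ 0 - β) * (1 - ρ) * u i +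
          ∑ k ∈ univ.filter (· ≠ i), (K i.succ k.succ - β) * u i * u k := by
        simp only [Mtilde, ← hρ]; rw [if_true]
      rw [this, mul_add, add_mul, Finset.mul_sum, Finset.sum_mul]
      congr 1
      · ring
      · exact Finset.sum_congr rfl fun j _ => by ring
    have hoff : ∀ j ∈ univ.filter (· ≠ i),
        z i * Mtilde n K β u i j * z j
          = -((K i.succ j.succ - β) * u i * u j * (z i * z j)) := by
      intro j hj
      have hji : j ≠ i := by simpa using hj
      simp only [Mtilde, if_neg (Ne.symm hji)]
      ring
    rw [hdiag, Finset.sum_congr rfl hoff, add_assoc, ← Finset.sum_add_distrib]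
    congr 1
    · exact Finset.sum_congr rfl fun j _ => by ring
  have hident : ∑ i, ∑ j, z i * Mtilde n K β u i j * z j =
      ∑ i, (K i.succ 0 - β) * (1 - ρ) * u i * z i ^ 2 +
        (1 / 2) * ∑ i, ∑ j ∈ univ.filter (· ≠ i),
          (K i.succ j.succ - β) * u i * u j * (z i - z j) ^ 2 := by
    rw [Finset.sum_congr rfl fun i _ => key i, Finset.sum_add_distrib]
    congr 1
    have hKsym : ∀ (i j : Fin n), K i.succ j.succ = K j.succ i.succ := fun i j =>
      hsym _ _
    have h2 : ∑ i, ∑ j ∈ univ.filter (· ≠ i),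
          (K i.succ j.succ - β) * u i * u j * (z i ^ 2 - z i * z j)
        = ∑ i, ∑ j ∈ univ.filter (· ≠ i),
          (K i.succ j.succ - β) * u i * u j * (z j ^ 2 - z i * z j) := by
      rw [hswap fun i j => (K i.succ j.succ - β) * u i * u j * (z i ^ 2 - z i * z j)]
      refine Finset.sum_congr rfl fun i _ => Finset.sum_congr rfl fun j _ => ?_
      rw [hKsym j i]; ring
    have : (2 : ℝ) * ∑ i, ∑ j ∈ univ.filter (· ≠ i),
          (K i.succ j.succ - β) * u i * u j * (z i ^ 2 - z i * z j)
        = ∑ i, ∑ j ∈ univ.filter (· ≠ i),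
          (K i.succ j.succ - β) * u i * u j * (z i - z j) ^ 2 := by
      rw [two_mul]
      nth_rewrite 2 [h2]
      rw [← Finset.sum_add_distrib]
      refine Finset.sum_congr rfl fun i _ => ?_
      rw [← Finset.sum_add_distrib]
      exact Finset.sum_congr rfl fun j _ => by ring
    linarith
  refine ⟨hident, ?_⟩
  rw [hident]
  have h1ρ : 0 ≤ 1 - ρ := by have := hu.2; simp only [← hρ] at this ⊢; linarith
  have hupos := hu.1
  have h1 : 0 ≤ ∑ i, (K i.succ 0 - β) * (1 - ρ) * u i * z i ^ 2 := by
    refine Finset.sum_nonneg fun i _ => ?_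
    have hK : 0 ≤ K i.succ 0 - β :=
      sub_nonneg.2 (hβle _ _ (Fin.succ_ne_zero i))
    exact mul_nonneg (mul_nonneg (mul_nonneg hK h1ρ) (hupos i).le) (sq_nonneg _)
  have h2 : 0 ≤ ∑ i, ∑ j ∈ univ.filter (· ≠ i),
      (K i.succ j.succ - β) * u i * u j * (z i - z j) ^ 2 := by
    refine Finset.sum_nonneg fun i _ => Finset.sum_nonneg fun j hj => ?_
    have hji : j ≠ i := by simpa using hj
    have hK : 0 ≤ K i.succ j.succ - β := by
      refine sub_nonneg.2 (hβle _ _ fun h => hji ?_)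
      exact (Fin.succ_injective n h).symm
    exact mul_nonneg (mul_nonneg (mul_nonneg hK (hupos i).le) (hupos j).le)
      (sq_nonneg _)
  linarith
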